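/- Let n ≥ 1, let K : ℝⁿ → (n×n real symmetric matrices) be smooth, and let ξ : ℝⁿ → ℝⁿ, ω : ℝⁿ → ℝ be smooth with £_ξ K = −ω·K, where (£_ξK)^{αβ} = Σ_ρ (ξ^ρ ∂K^{αβ}/∂q^ρ − (∂ξ^α/∂q^ρ) K^{ρβ} − (∂ξ^β/∂q^ρ) K^{αρ}). Suppose q, π : I → ℝⁿ are smooth on an interval I and satisfy Hamilton's equations dq^α/dτ = Σ_β K^{αβ}(q) π_β and dπ_α/dτ = −(1/2) Σ_{κ,λ} (∂K^{κλ}/∂q^α)(q) π_κ π_λ. Then d/dτ [Σ_α ξ^α(q(τ)) π_α(τ)] = (1/2) ω(q(τ)) Σ_{κ,λ} K^{κλ}(q(τ)) π_κ(τ) π_λ(τ). In particular, if in addition the Hamiltonian constraint (1/2) Σ K^{κλ}(q) π_κ π_λ + 1 = 0 holds along the curve, then d/dτ [Σ_α ξ^α(q) π_α] = −ω(q(τ)). -/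

import Mathlib

/-!
Along the flow, `d/dτ (ξ^α π_α) = (∂_ρ ξ^α) K^{ρβ} π_β π_α - ½ ξ^ρ (∂_ρ K^{κλ}) π_κ π_λ`, and by
the symmetry of `K` this is exactly `-½ (£_ξ K)^{αβ} π_α π_β`. The conformal Killing condition
turns it into `½ ω K^{κλ} π_κ π_λ`, and the Hamiltonian constraint fixes `K^{κλ} π_κ π_λ = -2`.
-/

open scoped BigOperators

/-- Partial derivative `∂f/∂q^α` of a scalar function on `ℝⁿ`. -/
noncomputable def pd {n : ℕ} (f : (Fin n → ℝ) → ℝ) (α : Fin n) (q : Fin n → ℝ) : ℝ :=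
  fderiv ℝ f q (Pi.single α 1)

/-- Lie derivative of a contravariant 2-tensor (inverse metric). -/
noncomputable def lieK {n : ℕ} (ξ : (Fin n → ℝ) → Fin n → ℝ)
    (K : (Fin n → ℝ) → Fin n → Fin n → ℝ) (q : Fin n → ℝ) (α β : Fin n) : ℝ :=
  ∑ ρ : Fin n, (ξ q ρ * pd (fun p => K p α β) ρ q
      - pd (fun p => ξ p α) ρ q * K q ρ β
      - pd (fun p => ξ p β) ρ q * K q α ρ)

theorem ContinuousLinearMap.apply_eq_sum_smul_single {𝕜 ι M : Type*} [RCLike 𝕜] [Fintype ι]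
    [DecidableEq ι] [NormedAddCommGroup M] [NormedSpace 𝕜 M] (L : (ι → 𝕜) →L[𝕜] M) (v : ι → 𝕜) :
    L v = ∑ ρ, v ρ • L (Pi.single ρ 1) := by
  conv_lhs => rw [← Finset.univ_sum_single v]
  refine (map_sum L _ _).trans (Finset.sum_congr rfl fun ρ _ => ?_)
  rw [← map_smul, ← Pi.single_smul', smul_eq_mul, mul_one]

theorem DifferentiableAt.hasDerivAt_comp_sum_pd {n : ℕ} {f : (Fin n → ℝ) → ℝ}
    {γ : ℝ → Fin n → ℝ} {γ' : Fin n → ℝ} {τ : ℝ} (hf : DifferentiableAt ℝ f (γ τ))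
    (hγ : HasDerivAt γ γ' τ) :
    HasDerivAt (fun s => f (γ s)) (∑ ρ, γ' ρ * pd f ρ (γ τ)) τ := by
  have := hf.hasFDerivAt.comp_hasDerivAt τ hγ
  rwa [ContinuousLinearMap.apply_eq_sum_smul_single] at this

theorem sum_lieK_mul_mul {n : ℕ} (ξ : (Fin n → ℝ) → Fin n → ℝ)
    (K : (Fin n → ℝ) → Fin n → Fin n → ℝ) (q : Fin n → ℝ)
    (hK : ∀ α β, K q α β = K q β α) (P : Fin n → ℝ) :
    ∑ α, ∑ β, lieK ξ K q α β * P α * P β =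
      ∑ ρ, ξ q ρ * ∑ κ, ∑ l, pd (fun p => K p κ l) ρ q * P κ * P l
        - 2 * ∑ α, (∑ ρ, (∑ β, K q ρ β * P β) * pd (fun p => ξ p α) ρ q) * P α := by
  have transport : ∑ α, ∑ β, ∑ ρ, ξ q ρ * pd (fun p => K p α β) ρ q * P α * P β =
      ∑ ρ, ξ q ρ * ∑ κ, ∑ l, pd (fun p => K p κ l) ρ q * P κ * P l := by
    simp only [Finset.mul_sum]
    refine (Finset.sum_congr rfl fun α _ => Finset.sum_comm).trans (Finset.sum_comm.trans ?_)
    exact Finset.sum_congr rfl fun ρ _ => Finset.sum_congr rfl fun α _ =>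
      Finset.sum_congr rfl fun β _ => by ring
  have swap : ∑ α, ∑ β, ∑ ρ, pd (fun p => ξ p β) ρ q * K q α ρ * P α * P β =
      ∑ α, ∑ β, ∑ ρ, pd (fun p => ξ p α) ρ q * K q ρ β * P α * P β := by
    rw [Finset.sum_comm]
    exact Finset.sum_congr rfl fun β _ => Finset.sum_congr rfl fun α _ =>
      Finset.sum_congr rfl fun ρ _ => by rw [hK]; ring
  have drift : ∑ α, (∑ ρ, (∑ β, K q ρ β * P β) * pd (fun p => ξ p α) ρ q) * P α =
      ∑ α, ∑ β, ∑ ρ, pd (fun p => ξ p α) ρ q * K q ρ β * P α * P β := by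
    refine Finset.sum_congr rfl fun α _ => ?_
    simp only [Finset.sum_mul]
    rw [Finset.sum_comm]
    exact Finset.sum_congr rfl fun β _ => Finset.sum_congr rfl fun ρ _ => by ring
  have expand : ∑ α, ∑ β, lieK ξ K q α β * P α * P β =
      ∑ α, ∑ β, ∑ ρ, ξ q ρ * pd (fun p => K p α β) ρ q * P α * P β
        - ∑ α, ∑ β, ∑ ρ, pd (fun p => ξ p α) ρ q * K q ρ β * P α * P β
        - ∑ α, ∑ β, ∑ ρ, pd (fun p => ξ p β) ρ q * K q α ρ * P α * P β := by
    simp only [lieK, Finset.sum_mul, sub_mul, Finset.sum_sub_distrib]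
  rw [expand, transport, swap, drift]
  ring

theorem hasDerivAt_sum_comp_mul {n : ℕ} {ξ : (Fin n → ℝ) → Fin n → ℝ}
    {q π : ℝ → Fin n → ℝ} {q' π' : Fin n → ℝ} {τ : ℝ} (hξ : DifferentiableAt ℝ ξ (q τ))
    (hq : HasDerivAt q q' τ) (hπ : HasDerivAt π π' τ) :
    HasDerivAt (fun s => ∑ α, ξ (q s) α * π s α)
      (∑ α, ((∑ ρ, q' ρ * pd (fun p => ξ p α) ρ (q τ)) * π τ α + ξ (q τ) α * π' α)) τ :=
  HasDerivAt.fun_sum fun α _ =>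
    ((differentiableAt_pi.1 hξ α).hasDerivAt_comp_sum_pd hq).mul (hasDerivAt_pi.1 hπ α)

theorem sum_hamilton_rate_eq_of_lieK_eq {n : ℕ} (ξ : (Fin n → ℝ) → Fin n → ℝ)
    (K : (Fin n → ℝ) → Fin n → Fin n → ℝ) (q : Fin n → ℝ) (w : ℝ)
    (hK : ∀ α β, K q α β = K q β α) (hlie : ∀ α β, lieK ξ K q α β = -w * K q α β)
    (P : Fin n → ℝ) :
    ∑ α, ((∑ ρ, (∑ β, K q ρ β * P β) * pd (fun p => ξ p α) ρ q) * P α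
        + ξ q α * (-(1 / 2) * ∑ κ, ∑ l, pd (fun p => K p κ l) α q * P κ * P l)) =
      (1 / 2) * w * ∑ κ, ∑ l, K q κ l * P κ * P l := by
  have contraction := sum_lieK_mul_mul ξ K q hK P
  have conformal : ∑ α, ∑ β, lieK ξ K q α β * P α * P β =
      -w * ∑ κ, ∑ l, K q κ l * P κ * P l := by
    simp only [hlie, Finset.mul_sum, mul_assoc]
  have force : ∑ α, ξ q α * (-(1 / 2) * ∑ κ, ∑ l, pd (fun p => K p κ l) α q * P κ * P l) =
      -(1 / 2) * ∑ ρ, ξ q ρ * ∑ κ, ∑ l, pd (fun p => K p κ l) ρ q * P κ * P l := by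
    rw [Finset.mul_sum]
    exact Finset.sum_congr rfl fun α _ => by ring
  rw [Finset.sum_add_distrib, force]
  linarith

theorem charge_evolution_along_hamilton_flow_general (n : ℕ)
    (K : (Fin n → ℝ) → Fin n → Fin n → ℝ)
    (hKsymm : ∀ q α β, K q α β = K q β α)
    (ξ : (Fin n → ℝ) → Fin n → ℝ) (ω : (Fin n → ℝ) → ℝ)
    (hξsmooth : ContDiff ℝ (⊤ : ℕ∞) ξ)
    (hlie : ∀ q α β, lieK ξ K q α β = -(ω q) * K q α β)
    (I : Set ℝ) (q π : ℝ → Fin n → ℝ) (qd πd : ℝ → Fin n → ℝ)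
    (hq : ∀ τ ∈ I, HasDerivAt q (qd τ) τ)
    (hπ : ∀ τ ∈ I, HasDerivAt π (πd τ) τ)
    -- Hamilton's equations
    (hham1 : ∀ τ ∈ I, ∀ α : Fin n, qd τ α = ∑ β : Fin n, K (q τ) α β * π τ β)
    (hham2 : ∀ τ ∈ I, ∀ α : Fin n,
      πd τ α = -(1 / 2) * ∑ κ : Fin n, ∑ lam : Fin n,
        pd (fun p => K p κ lam) α (q τ) * π τ κ * π τ lam) :
    (∀ τ ∈ I, HasDerivAt (fun s => ∑ α : Fin n, ξ (q s) α * π s α)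
        ((1 / 2) * ω (q τ) * ∑ κ : Fin n, ∑ lam : Fin n, K (q τ) κ lam * π τ κ * π τ lam) τ)
    ∧ ((∀ s ∈ I, (1 / 2) * (∑ κ : Fin n, ∑ lam : Fin n, K (q s) κ lam * π s κ * π s lam)
          + 1 = 0) →
        ∀ τ ∈ I, HasDerivAt (fun s => ∑ α : Fin n, ξ (q s) α * π s α) (-(ω (q τ))) τ) := by
  have rate : ∀ τ ∈ I, HasDerivAt (fun s => ∑ α : Fin n, ξ (q s) α * π s α)
      ((1 / 2) * ω (q τ) * ∑ κ : Fin n, ∑ lam : Fin n, K (q τ) κ lam * π τ κ * π τ lam) τ := by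
    intro τ hτ
    have h := hasDerivAt_sum_comp_mul (hξsmooth.differentiable (by simp) (q τ))
      (hq τ hτ) (hπ τ hτ)
    simp only [hham1 τ hτ, hham2 τ hτ] at h
    rwa [sum_hamilton_rate_eq_of_lieK_eq ξ K (q τ) (ω (q τ)) (hKsymm _) (hlie _)] at h
  refine ⟨rate, fun hconstraint τ hτ => ?_⟩
  have hkinetic : ∑ κ : Fin n, ∑ lam : Fin n, K (q τ) κ lam * π τ κ * π τ lam = -2 := by
    linarith [hconstraint τ hτ]
  convert rate τ hτ using 1
  rw [hkinetic]
  ring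

/-- along solutions of Hamilton's equations, if `£_ξ K = −ω·K` then
`d/dτ (Σ ξ^α π_α) = (1/2) ω Σ K^{κλ} π_κ π_λ`; with the constraint
`(1/2)ΣK^{κλ}π_κπ_λ + 1 = 0`, this equals `−ω`. -/
theorem charge_evolution_along_hamilton_flow (n : ℕ) (hn : 1 ≤ n)
    (K : (Fin n → ℝ) → Fin n → Fin n → ℝ)
    (hKsmooth : ∀ α β, ContDiff ℝ (⊤ : ℕ∞) fun q => K q α β)
    (hKsymm : ∀ q α β, K q α β = K q β α)
    (ξ : (Fin n → ℝ) → Fin n → ℝ) (ω : (Fin n → ℝ) → ℝ)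
    (hξsmooth : ContDiff ℝ (⊤ : ℕ∞) ξ)
    (hωsmooth : ContDiff ℝ (⊤ : ℕ∞) ω)
    (hlie : ∀ q α β, lieK ξ K q α β = -(ω q) * K q α β)
    (I : Set ℝ) (q π : ℝ → Fin n → ℝ) (qd πd : ℝ → Fin n → ℝ)
    (hq : ∀ τ ∈ I, HasDerivAt q (qd τ) τ)
    (hπ : ∀ τ ∈ I, HasDerivAt π (πd τ) τ)
    -- Hamilton's equations
    (hham1 : ∀ τ ∈ I, ∀ α : Fin n, qd τ α = ∑ β : Fin n, K (q τ) α β * π τ β)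
    (hham2 : ∀ τ ∈ I, ∀ α : Fin n,
      πd τ α = -(1 / 2) * ∑ κ : Fin n, ∑ lam : Fin n,
        pd (fun p => K p κ lam) α (q τ) * π τ κ * π τ lam) :
    (∀ τ ∈ I, HasDerivAt (fun s => ∑ α : Fin n, ξ (q s) α * π s α)
        ((1 / 2) * ω (q τ) * ∑ κ : Fin n, ∑ lam : Fin n, K (q τ) κ lam * π τ κ * π τ lam) τ)
    ∧ ((∀ s ∈ I, (1 / 2) * (∑ κ : Fin n, ∑ lam : Fin n, K (q s) κ lam * π s κ * π s lam)
          + 1 = 0) →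
        ∀ τ ∈ I, HasDerivAt (fun s => ∑ α : Fin n, ξ (q s) α * π s α) (-(ω (q τ))) τ) :=
  charge_evolution_along_hamilton_flow_general n K hKsymm ξ ω hξsmooth hlie I q π qd πd hq hπ hham1
    hham2
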